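/- arXiv:0902.0488 — 2 statements merged into one kernel-verified Lean document; each statement's English description precedes it below -/
import Mathlib

section
/- Let β > 1 be a Pisot number and let m > β be a positive integer. For x ∈ I_β and n ≥ 1, let ℰ_n(x;β) denote the set of words (ε₁,…,ε_n) ∈ {0,1,…,m−1}^n occurring as the first n digits of some β-expansion of x, and let ℰ′_n(x;β) = {(ε₁,…,ε_n) ∈ {0,1,…,m−1}^n : x − (m−1)β^{−n}/(β−1) − β^{−n}/n² ≤ Σ_{k=1}^n ε_k β^{−k} ≤ x + β^{−n}/n²}. Then for Lebesgue-almost every x ∈ I_β, ℰ′_n(x;β) = ℰ_n(x;β) for all but finitely many n. -/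
open MeasureTheory Filter Set

/-- Number of length-`n` prefixes of β-expansions of `x` with digits in `{0,…,m-1}`. -/
noncomputable def Nn (β : ℝ) (m n : ℕ) (x : ℝ) : ℕ :=
  Nat.card {w : Fin n → Fin m // ∃ ε : ℕ → Fin m,
    (∀ k : Fin n, ε k = w k) ∧ x = ∑' k : ℕ, ((ε k : ℕ) : ℝ) / β ^ (k + 1)}

/-- β is a Pisot number. -/
def IsPisot (β : ℝ) : Prop :=
  1 < β ∧ ∃ p : Polynomial ℤ, p.Monic ∧ Polynomial.aeval β p = 0 ∧
    ∀ z : ℂ, Polynomial.aeval z p = 0 → z ≠ (β : ℂ) → ‖z‖ < 1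

/-- μ_{β,m}: pushforward of the infinite product of uniform measures on `{0,…,m-1}`
under `(ε_k) ↦ Σ ε_k β^{-(k+1)}`, realized via the base-`m` digit sequence of a
Lebesgue-random point of `[0,1)`. -/
noncomputable def mu (β : ℝ) (m : ℕ) : Measure ℝ :=
  Measure.map
    (fun x : ℝ => ∑' k : ℕ, ((⌊x * (m : ℝ) ^ (k + 1)⌋.toNat % m : ℕ) : ℝ) / β ^ (k + 1))
    (volume.restrict (Ico 0 1))

/-!
Because `β` is Pisot, a nonzero `∑ d_k β^k` with integer digits `|d_k| ≤ m` is an algebraic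
integer whose other conjugates are uniformly bounded, so its norm (a nonzero integer) forces
`|∑ d_k β^k| ≥ c > 0` (Garsia). Hence the `n`-prefix sums `S_w` are `c β^{-n}`-separated points
of `I_β`, and there are `O(β^n)` of them. A word `w` belongs to `ℰ_n(x;β)` iff
`x ∈ [S_w, S_w + β^{-n}(m-1)/(β-1)]` (every point of `I_β` is the value of a greedy tail), and
to `ℰ′_n(x;β)` iff `x` lies in that interval enlarged by `β^{-n}/n²` on both sides. So the two
sets differ only on a set of measure `O(β^n · β^{-n}/n²) = O(1/n²)`, which is summable, and
Borel–Cantelli concludes.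
-/

noncomputable def prefixSum (β : ℝ) {m n : ℕ} (w : Fin n → Fin m) : ℝ :=
  ∑ k : Fin n, ((w k : ℕ) : ℝ) / β ^ ((k : ℕ) + 1)

noncomputable def expansionValue (β : ℝ) {m : ℕ} (ε : ℕ → Fin m) : ℝ :=
  ∑' k : ℕ, ((ε k : ℕ) : ℝ) / β ^ (k + 1)

noncomputable def greedyDigit (β : ℝ) (m : ℕ) (t : ℝ) : ℕ := min ⌊β * t⌋₊ (m - 1)

noncomputable def greedyMap (β : ℝ) (m : ℕ) (t : ℝ) : ℝ := β * t - greedyDigit β m t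

section Expansions

variable {β : ℝ} {m : ℕ}

lemma digit_le_pred (d : Fin m) : ((d : ℕ) : ℝ) ≤ (m : ℝ) - 1 := by
  have : ((d : ℕ) : ℝ) + 1 ≤ m := by exact_mod_cast d.isLt
  linarith

lemma hasSum_inv_pow_succ (hβ : 1 < β) : HasSum (fun k : ℕ => β⁻¹ ^ (k + 1)) (β - 1)⁻¹ := by
  have hβ0 : β ≠ 0 := by positivity
  have h := (hasSum_geometric_of_lt_one (by positivity) (inv_lt_one_of_one_lt₀ hβ)).mul_left β⁻¹
  have hsum : β⁻¹ * (1 - β⁻¹)⁻¹ = (β - 1)⁻¹ := by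
    rw [← mul_inv, mul_comm, sub_mul, one_mul, inv_mul_cancel₀ hβ0]
  simpa only [← pow_succ', hsum] using h

lemma digit_div_pow_le (hβ : 1 < β) (d : Fin m) (k : ℕ) :
    ((d : ℕ) : ℝ) / β ^ (k + 1) ≤ ((m : ℝ) - 1) * β⁻¹ ^ (k + 1) := by
  rw [div_eq_mul_inv, ← inv_pow]
  exact mul_le_mul_of_nonneg_right (digit_le_pred d) (by positivity)

lemma summable_digit_div_pow (hβ : 1 < β) (ε : ℕ → Fin m) :
    Summable fun k => ((ε k : ℕ) : ℝ) / β ^ (k + 1) :=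
  ((hasSum_inv_pow_succ hβ).summable.mul_left _).of_nonneg_of_le (fun _ => by positivity)
    fun k => digit_div_pow_le hβ (ε k) k

lemma expansionValue_mem_Icc (hβ : 1 < β) (ε : ℕ → Fin m) :
    expansionValue β ε ∈ Icc 0 (((m : ℝ) - 1) / (β - 1)) := by
  refine ⟨tsum_nonneg fun _ => by positivity, ?_⟩
  rw [div_eq_mul_inv, ← ((hasSum_inv_pow_succ hβ).mul_left _).tsum_eq]
  exact (summable_digit_div_pow hβ ε).tsum_le_tsum (fun k => digit_div_pow_le hβ (ε k) k)
    ((hasSum_inv_pow_succ hβ).summable.mul_left _)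

lemma expansionValue_eq_prefixSum_add (hβ : 1 < β) (ε : ℕ → Fin m) (n : ℕ) :
    expansionValue β ε =
      prefixSum β (fun k : Fin n => ε k) + β⁻¹ ^ n * expansionValue β (fun j => ε (j + n)) := by
  rw [expansionValue, ← (summable_digit_div_pow hβ ε).sum_add_tsum_nat_add n, prefixSum,
    Fin.sum_univ_eq_sum_range (fun k => ((ε k : ℕ) : ℝ) / β ^ (k + 1)), expansionValue,
    ← tsum_mul_left]
  congr 2 with j
  rw [add_right_comm, pow_add, inv_pow]
  field_simp

lemma greedyMap_mapsTo (hβ : 1 < β) (hm : β ≤ m) :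
    MapsTo (greedyMap β m) (Icc 0 (((m : ℝ) - 1) / (β - 1)))
      (Icc 0 (((m : ℝ) - 1) / (β - 1))) := by
  rintro t ⟨ht0, htM⟩
  have hβ1 : 0 < β - 1 := by linarith
  have hm1 : 1 ≤ m := by exact_mod_cast hβ.le.trans hm
  have hpred : ((m - 1 : ℕ) : ℝ) = (m : ℝ) - 1 := by rw [Nat.cast_sub hm1, Nat.cast_one]
  have hβt : 0 ≤ β * t := by positivity
  have hM : β * (((m : ℝ) - 1) / (β - 1)) - ((m : ℝ) - 1) = ((m : ℝ) - 1) / (β - 1) := by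
    field_simp; ring
  have hM1 : 1 ≤ ((m : ℝ) - 1) / (β - 1) := by rw [le_div_iff₀ hβ1]; linarith
  unfold greedyMap greedyDigit
  rcases le_total ⌊β * t⌋₊ (m - 1) with h | h
  · rw [min_eq_left h]
    have := Nat.lt_floor_add_one (β * t)
    exact ⟨by linarith [Nat.floor_le hβt], by linarith⟩
  · rw [min_eq_right h, hpred]
    have hle : ((m - 1 : ℕ) : ℝ) ≤ ⌊β * t⌋₊ := by exact_mod_cast h
    rw [hpred] at hle
    have := mul_le_mul_of_nonneg_left htM (by linarith : 0 ≤ β)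
    exact ⟨by linarith [Nat.floor_le hβt], by linarith⟩

lemma exists_expansionValue_eq (hβ : 1 < β) (hm : β ≤ m) {y : ℝ}
    (hy : y ∈ Icc 0 (((m : ℝ) - 1) / (β - 1))) : ∃ ε : ℕ → Fin m, expansionValue β ε = y := by
  have hm1 : 1 ≤ m := by exact_mod_cast hβ.le.trans hm
  set t : ℕ → ℝ := fun j => (greedyMap β m)^[j] y
  have ht : ∀ j, t j ∈ Icc 0 (((m : ℝ) - 1) / (β - 1)) := fun j =>
    (greedyMap_mapsTo hβ hm).iterate j hy
  let ε : ℕ → Fin m := fun j => ⟨greedyDigit β m (t j), (min_le_right _ _).trans_lt (by omega)⟩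
  have hpartial : ∀ N, ∑ j ∈ Finset.range N, ((ε j : ℕ) : ℝ) / β ^ (j + 1) = y - t N / β ^ N := by
    intro N
    induction N with
    | zero => simp [t]
    | succ N ih =>
      rw [Finset.sum_range_succ, ih]
      simp only [t, Function.iterate_succ_apply', greedyMap, ε]
      field_simp
      ring
  have hrem : Tendsto (fun N => t N / β ^ N) atTop (nhds 0) := by
    have hgeom := (tendsto_pow_atTop_nhds_zero_of_lt_one (by positivity)
      (inv_lt_one_of_one_lt₀ hβ)).const_mul (((m : ℝ) - 1) / (β - 1))
    rw [mul_zero] at hgeom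
    refine squeeze_zero (fun N => div_nonneg (ht N).1 (by positivity)) (fun N => ?_) hgeom
    rw [inv_pow, ← div_eq_mul_inv]
    exact div_le_div_of_nonneg_right (ht N).2 (by positivity)
  refine ⟨ε, ((hasSum_iff_tendsto_nat_of_nonneg (fun _ => by positivity) y).2 ?_).tsum_eq⟩
  simpa only [hpartial, sub_zero] using tendsto_const_nhds.sub hrem

end Expansions

lemma exists_expansion_with_prefix_iff {β : ℝ} {m n : ℕ} (hβ : 1 < β) (hm : β ≤ m) (x : ℝ)
    (w : Fin n → Fin m) :
    (∃ ε : ℕ → Fin m, (∀ k : Fin n, ε k = w k) ∧ x = expansionValue β ε) ↔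
      x ∈ Icc (prefixSum β w) (prefixSum β w + β⁻¹ ^ n * (((m : ℝ) - 1) / (β - 1))) := by
  have hβn : 0 < β ^ n := by positivity
  constructor
  · rintro ⟨ε, hεw, rfl⟩
    obtain ⟨h0, h1⟩ := expansionValue_mem_Icc hβ fun j => ε (j + n)
    rw [expansionValue_eq_prefixSum_add hβ ε n, funext hεw]
    have := mul_le_mul_of_nonneg_left h1 (by positivity : (0 : ℝ) ≤ β⁻¹ ^ n)
    exact ⟨by simp only [le_add_iff_nonneg_right]; positivity, by linarith⟩
  · rintro ⟨h0, h1⟩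
    have hy : β ^ n * (x - prefixSum β w) ∈ Icc 0 (((m : ℝ) - 1) / (β - 1)) := by
      refine ⟨by nlinarith, ?_⟩
      have := mul_le_mul_of_nonneg_left (sub_le_iff_le_add'.2 h1) hβn.le
      rwa [← mul_assoc, inv_pow, mul_inv_cancel₀ hβn.ne', one_mul] at this
    obtain ⟨d, hd⟩ := exists_expansionValue_eq hβ hm hy
    let ε : ℕ → Fin m := fun k => if h : k < n then w ⟨k, h⟩ else d (k - n)
    have hprefix : (fun k : Fin n => ε k) = w := funext fun k => dif_pos k.isLt
    have htail : (fun j => ε (j + n)) = d := funext fun j => by simp [ε]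
    refine ⟨ε, fun k => congrFun hprefix k, ?_⟩
    rw [expansionValue_eq_prefixSum_add hβ ε n, hprefix, htail, hd, ← mul_assoc, inv_pow,
      inv_mul_cancel₀ hβn.ne', one_mul, add_sub_cancel]

section Garsia

open IntermediateField

lemma one_le_prod_norm_embeddings {K : Type*} [Field K] [Algebra ℚ K] [FiniteDimensional ℚ K]
    {x : K} (hx : IsIntegral ℤ x) (hx0 : x ≠ 0) : 1 ≤ ∏ σ : K →ₐ[ℚ] ℂ, ‖σ x‖ := by
  obtain ⟨z, hz⟩ := IsIntegrallyClosed.isIntegral_iff.1 (Algebra.isIntegral_norm ℚ hx)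
  have hz0 : z ≠ 0 := by
    rintro rfl
    exact Algebra.norm_ne_zero_iff.2 hx0 (by rw [← hz, map_zero])
  rw [← norm_prod, ← Algebra.norm_eq_prod_embeddings ℚ ℂ x, ← hz]
  simpa using (Int.cast_le (R := ℝ)).2 (Int.one_le_abs hz0)

lemma norm_sum_intCast_mul_pow_le {z : ℂ} {θ : ℝ} (hθ : θ < 1) (hz : ‖z‖ ≤ θ) {m n : ℕ}
    (d : Fin n → ℤ) (hd : ∀ k, |d k| ≤ m) :
    ‖∑ k : Fin n, (d k : ℂ) * z ^ (k : ℕ)‖ ≤ m / (1 - θ) := by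
  have hθ0 : 0 ≤ θ := (norm_nonneg z).trans hz
  calc ‖∑ k : Fin n, (d k : ℂ) * z ^ (k : ℕ)‖
      ≤ ∑ k : Fin n, (m : ℝ) * θ ^ (k : ℕ) := by
        refine (norm_sum_le _ _).trans (Finset.sum_le_sum fun k _ => ?_)
        rw [norm_mul, norm_pow, Complex.norm_intCast]
        exact mul_le_mul (by exact_mod_cast hd k) (pow_le_pow_left₀ (norm_nonneg z) hz _)
          (by positivity) (by positivity)
    _ = m * ∑ k ∈ Finset.Ico 0 n, θ ^ k := by
        rw [← Finset.mul_sum, Fin.sum_univ_eq_sum_range (fun k => θ ^ k), Finset.range_eq_Ico]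
    _ ≤ m * (θ ^ 0 / (1 - θ)) := by gcongr; exact geom_sum_Ico_le_of_lt_one hθ0 hθ
    _ = m / (1 - θ) := by rw [pow_zero, mul_one_div]

noncomputable def realEmbedding (β : ℝ) : ℚ⟮β⟯ →ₐ[ℚ] ℂ :=
  (Complex.ofRealAm.restrictScalars ℚ).comp (ℚ⟮β⟯).val

lemma aeval_gen_eq_zero_iff {β : ℝ} (p : Polynomial ℤ) :
    Polynomial.aeval (AdjoinSimple.gen ℚ β) p = 0 ↔ Polynomial.aeval β p = 0 := by
  rw [← ZeroMemClass.coe_eq_zero, ← IntermediateField.aeval_coe, AdjoinSimple.coe_gen]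

namespace IsPisot

variable {β : ℝ}

lemma isIntegral (hβ : IsPisot β) : IsIntegral ℤ β :=
  let ⟨_, p, hmonic, hroot, _⟩ := hβ
  ⟨p, hmonic, hroot⟩

lemma isIntegral_gen (hβ : IsPisot β) : IsIntegral ℤ (AdjoinSimple.gen ℚ β) :=
  (isIntegral_algHom_iff (ℚ⟮β⟯).val.toRingHom.toIntAlgHom Subtype.val_injective).1 hβ.isIntegral

lemma finiteDimensional_adjoin (hβ : IsPisot β) : FiniteDimensional ℚ ℚ⟮β⟯ :=
  adjoin.finiteDimensional hβ.isIntegral.tower_top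

lemma norm_embedding_gen_lt_one (hβ : IsPisot β) {σ : ℚ⟮β⟯ →ₐ[ℚ] ℂ}
    (hσ : σ ≠ realEmbedding β) : ‖σ (AdjoinSimple.gen ℚ β)‖ < 1 := by
  obtain ⟨-, p, -, hroot, hconj⟩ := hβ
  refine hconj _ ?_ fun h => hσ (adjoin_algHom_ext ℚ ?_)
  · simpa only [(aeval_gen_eq_zero_iff p).2 hroot, map_zero, AlgHom.coe_restrictScalars'] using
      Polynomial.aeval_algHom_apply (σ.restrictScalars ℤ) (AdjoinSimple.gen ℚ β) p
  · rintro _ rfl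
    exact h

/-- Garsia's separation lemma. -/
theorem exists_pos_le_abs_sum_mul_pow (hβ : IsPisot β) (m : ℕ) :
    ∃ c > 0, ∀ (n : ℕ) (d : Fin n → ℤ), (∀ k, |d k| ≤ m) →
      ∑ k : Fin n, (d k : ℝ) * β ^ (k : ℕ) ≠ 0 → c ≤ |∑ k : Fin n, (d k : ℝ) * β ^ (k : ℕ)| := by
  classical
  have := hβ.finiteDimensional_adjoin
  set γ := AdjoinSimple.gen ℚ β
  set T := Finset.univ.erase (realEmbedding β)
  set θ : NNReal := T.sup fun σ => ‖σ γ‖₊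
  have hθ : (θ : ℝ) < 1 := NNReal.coe_lt_one.2 <| (Finset.sup_lt_iff zero_lt_one).2 fun σ hσ =>
    hβ.norm_embedding_gen_lt_one (Finset.ne_of_mem_erase hσ)
  set B : ℝ := m / (1 - θ) + 1
  have hB : 0 < B := by have := sub_pos.2 hθ; positivity
  refine ⟨(B ^ T.card)⁻¹, by positivity, fun n d hd hv => ?_⟩
  set x : ℚ⟮β⟯ := ∑ k : Fin n, (d k : ℚ⟮β⟯) * γ ^ (k : ℕ)
  have hσx : ∀ σ : ℚ⟮β⟯ →ₐ[ℚ] ℂ, σ x = ∑ k : Fin n, (d k : ℂ) * σ γ ^ (k : ℕ) := fun σ => by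
    simp only [x, map_sum, map_mul, map_pow, map_intCast]
  have hx : realEmbedding β x = ((∑ k : Fin n, (d k : ℝ) * β ^ (k : ℕ) : ℝ) : ℂ) := by
    rw [hσx]; push_cast; rfl
  have hxint : IsIntegral ℤ x :=
    IsIntegral.sum _ fun k _ => (isIntegral_algebraMap (x := d k)).mul (hβ.isIntegral_gen.pow _)
  have hx0 : x ≠ 0 := by
    intro h
    rw [h, map_zero] at hx
    exact hv (by exact_mod_cast hx.symm)
  have hconj : ∀ σ ∈ T, ‖σ x‖ ≤ B := fun σ hσ => by
    rw [hσx]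
    refine (norm_sum_intCast_mul_pow_le hθ ?_ d hd).trans (le_add_of_nonneg_right zero_le_one)
    exact NNReal.coe_le_coe.2 (Finset.le_sup (f := fun σ => ‖σ γ‖₊) hσ)
  rw [inv_le_iff_one_le_mul₀ (by positivity)]
  calc 1 ≤ ∏ σ : ℚ⟮β⟯ →ₐ[ℚ] ℂ, ‖σ x‖ := one_le_prod_norm_embeddings hxint hx0
    _ = ‖realEmbedding β x‖ * ∏ σ ∈ T, ‖σ x‖ := (Finset.mul_prod_erase _ _ (Finset.mem_univ _)).symm
    _ ≤ |∑ k : Fin n, (d k : ℝ) * β ^ (k : ℕ)| * B ^ T.card := by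
      rw [hx, Complex.norm_real, Real.norm_eq_abs]
      gcongr
      exact (Finset.prod_le_prod (fun _ _ => norm_nonneg _) hconj).trans_eq (Finset.prod_const B)

end IsPisot

end Garsia

section Separation

variable {β : ℝ} {m n : ℕ}

lemma sub_one_div_sub_one_nonneg (hβ : 1 < β) (hm : 1 ≤ m) : 0 ≤ ((m : ℝ) - 1) / (β - 1) :=
  div_nonneg (sub_nonneg.2 (by exact_mod_cast hm)) (sub_nonneg.2 hβ.le)

lemma prefixSum_mem_Icc (hβ : 1 < β) (hm : 1 ≤ m) (w : Fin n → Fin m) :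
    prefixSum β w ∈ Icc 0 (((m : ℝ) - 1) / (β - 1)) := by
  have hm' : (0 : ℝ) ≤ m - 1 := by rw [sub_nonneg]; exact_mod_cast hm
  refine ⟨Finset.sum_nonneg fun _ _ => by positivity, ?_⟩
  calc prefixSum β w ≤ ∑ k ∈ Finset.range n, ((m : ℝ) - 1) * β⁻¹ ^ (k + 1) := by
        rw [← Fin.sum_univ_eq_sum_range (fun k => ((m : ℝ) - 1) * β⁻¹ ^ (k + 1))]
        exact Finset.sum_le_sum fun k _ => digit_div_pow_le hβ (w k) k
    _ ≤ ((m : ℝ) - 1) / (β - 1) :=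
        sum_le_hasSum _ (fun _ _ => by positivity) ((hasSum_inv_pow_succ hβ).mul_left _)

lemma pow_mul_sub_prefixSum (hβ : β ≠ 0) (w w' : Fin n → Fin m) :
    β ^ n * (prefixSum β w - prefixSum β w') =
      ∑ j : Fin n, ((((w j.rev : ℕ) : ℤ) - ((w' j.rev : ℕ) : ℤ) : ℤ) : ℝ) * β ^ (j : ℕ) := by
  rw [← Equiv.sum_comp Fin.revPerm, prefixSum, prefixSum, ← Finset.sum_sub_distrib,
    Finset.mul_sum]
  refine Finset.sum_congr rfl fun k _ => ?_
  rw [Fin.revPerm_apply, Fin.rev_rev, Fin.val_rev, pow_sub₀ β hβ k.isLt, Nat.succ_eq_add_one]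
  push_cast
  ring

lemma IsPisot.exists_pos_le_abs_sub_prefixSum (hβ : IsPisot β) (m : ℕ) :
    ∃ c > 0, ∀ (n : ℕ) (w w' : Fin n → Fin m), prefixSum β w ≠ prefixSum β w' →
      c * β⁻¹ ^ n ≤ |prefixSum β w - prefixSum β w'| := by
  obtain ⟨c, hc, hsep⟩ := hβ.exists_pos_le_abs_sum_mul_pow m
  refine ⟨c, hc, fun n w w' hne => ?_⟩
  have hβ0 : 0 < β := by linarith [hβ.1]
  have hβn : 0 < β ^ n := by positivity
  have hkey := pow_mul_sub_prefixSum hβ0.ne' w w'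
  have hd : ∀ j : Fin n, |((w j.rev : ℕ) : ℤ) - ((w' j.rev : ℕ) : ℤ)| ≤ m := fun j => by
    have := (w j.rev).isLt
    have := (w' j.rev).isLt
    rw [abs_le]; constructor <;> omega
  have := hsep n _ hd (by rw [← hkey]; exact mul_ne_zero hβn.ne' (sub_ne_zero.2 hne))
  rw [← hkey, abs_mul, abs_of_pos hβn] at this
  rw [inv_pow, ← div_eq_mul_inv, div_le_iff₀ hβn]
  linarith

end Separation

lemma card_le_of_separated {V : Finset ℝ} {a b δ : ℝ} (hab : a ≤ b) (hδ : 0 < δ)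
    (hV : ∀ v ∈ V, v ∈ Icc a b)
    (hsep : ∀ u ∈ V, ∀ v ∈ V, u ≠ v → δ ≤ |u - v|) : (V.card : ℝ) ≤ (b - a) / δ + 1 := by
  have hidx : ∀ v ∈ V, 0 ≤ (v - a) / δ := fun v hv => div_nonneg (sub_nonneg.2 (hV v hv).1) hδ.le
  have hinj : InjOn (fun v => ⌊(v - a) / δ⌋₊) V := by
    intro u hu v hv huv
    by_contra hne
    have hfloor : ⌊(u - a) / δ⌋ = ⌊(v - a) / δ⌋ := by
      rw [← Int.natCast_floor_eq_floor (hidx u hu), ← Int.natCast_floor_eq_floor (hidx v hv)]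
      exact congrArg _ huv
    have := Int.abs_sub_lt_one_of_floor_eq_floor hfloor
    rw [← sub_div, sub_sub_sub_cancel_right, abs_div, abs_of_pos hδ, div_lt_one hδ] at this
    exact (hsep u hu v hv hne).not_gt this
  have hmaps : MapsTo (fun v => ⌊(v - a) / δ⌋₊) V (Finset.range (⌊(b - a) / δ⌋₊ + 1)) :=
    fun v hv => Finset.mem_range_succ_iff.2 <| Nat.floor_le_floor <|
      div_le_div_of_nonneg_right (sub_le_sub_right (hV v hv).2 a) hδ.le
  calc (V.card : ℝ) ≤ (⌊(b - a) / δ⌋₊ + 1 : ℕ) := by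
        exact_mod_cast (Finset.card_le_card_of_injOn _ hmaps hinj).trans (Finset.card_range _).le
    _ ≤ (b - a) / δ + 1 := by
        push_cast
        gcongr
        exact Nat.floor_le (div_nonneg (sub_nonneg.2 hab) hδ.le)

lemma volume_Icc_diff_Icc_le (a b : ℝ) {δ : ℝ} (hδ : 0 ≤ δ) :
    volume (Icc (a - δ) (b + δ) \ Icc a b) ≤ ENNReal.ofReal (2 * δ) := by
  have hsub : Icc (a - δ) (b + δ) \ Icc a b ⊆ Ico (a - δ) a ∪ Ioc b (b + δ) := by
    rintro x ⟨⟨h1, h2⟩, h3⟩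
    rcases lt_or_ge x a with h | h
    · exact Or.inl ⟨h1, h⟩
    · exact Or.inr ⟨lt_of_not_ge fun h' => h3 ⟨h, h'⟩, h2⟩
  calc volume (Icc (a - δ) (b + δ) \ Icc a b)
      ≤ volume (Ico (a - δ) a) + volume (Ioc b (b + δ)) :=
        (measure_mono hsub).trans (measure_union_le _ _)
    _ = ENNReal.ofReal (2 * δ) := by
        rw [Real.volume_Ico, Real.volume_Ioc, sub_sub_cancel, add_sub_cancel_left,
          ← ENNReal.ofReal_add hδ hδ, two_mul]

noncomputable def fringe (β : ℝ) (m n : ℕ) : Set ℝ :=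
  ⋃ w : Fin n → Fin m,
    Icc (prefixSum β w - β⁻¹ ^ n / (n : ℝ) ^ 2)
        (prefixSum β w + β⁻¹ ^ n * (((m : ℝ) - 1) / (β - 1)) + β⁻¹ ^ n / (n : ℝ) ^ 2) \
      Icc (prefixSum β w) (prefixSum β w + β⁻¹ ^ n * (((m : ℝ) - 1) / (β - 1)))

section Fringe

variable {β : ℝ} {m n : ℕ}

lemma enlargedPrefixSet_eq_of_notMem_fringe (hβ : 1 < β) (hm : β ≤ m) {x : ℝ}
    (hx : x ∉ fringe β m n) :
    {w : Fin n → Fin m | x - ((m : ℝ) - 1) * β⁻¹ ^ n / (β - 1) - β⁻¹ ^ n / (n : ℝ) ^ 2 ≤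
        prefixSum β w ∧ prefixSum β w ≤ x + β⁻¹ ^ n / (n : ℝ) ^ 2} =
      {w | ∃ ε : ℕ → Fin m, (∀ k : Fin n, ε k = w k) ∧ x = expansionValue β ε} := by
  ext w
  rw [mem_ofPred_eq, mem_ofPred_eq, exists_expansion_with_prefix_iff hβ hm]
  have hR : ((m : ℝ) - 1) * β⁻¹ ^ n / (β - 1) = β⁻¹ ^ n * (((m : ℝ) - 1) / (β - 1)) := by ring
  have hδ : 0 ≤ β⁻¹ ^ n / (n : ℝ) ^ 2 := by have := hβ.le; positivity
  rw [hR]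
  constructor
  · rintro ⟨h1, h2⟩
    by_contra hw
    exact hx (mem_iUnion_of_mem w ⟨⟨by linarith, by linarith⟩, hw⟩)
  · rintro ⟨h1, h2⟩
    exact ⟨by linarith, by linarith⟩

lemma volume_fringe_le (hβ : 1 < β) (hm : 1 ≤ m) {c : ℝ} (hc : 0 < c)
    (hsep : ∀ w w' : Fin n → Fin m, prefixSum β w ≠ prefixSum β w' →
      c * β⁻¹ ^ n ≤ |prefixSum β w - prefixSum β w'|) :
    volume (fringe β m n) ≤
      ENNReal.ofReal (2 * (((m : ℝ) - 1) / (β - 1) / c + 1) / (n : ℝ) ^ 2) := by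
  classical
  set M := ((m : ℝ) - 1) / (β - 1)
  set t := β⁻¹ ^ n
  set V := Finset.univ.image fun w : Fin n → Fin m => prefixSum β w
  have hM : 0 ≤ M := sub_one_div_sub_one_nonneg hβ hm
  have ht : 0 < t := by positivity
  have ht1 : t ≤ 1 := pow_le_one₀ (by positivity) (inv_le_one_of_one_le₀ hβ.le)
  have hunion : fringe β m n =
      ⋃ v ∈ V, Icc (v - t / (n : ℝ) ^ 2) (v + t * M + t / (n : ℝ) ^ 2) \ Icc v (v + t * M) := by
    simp only [fringe, V, Finset.set_biUnion_finset_image, Finset.mem_univ, iUnion_true]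
    rfl
  have hcard : (V.card : ℝ) ≤ M / (c * t) + 1 := by
    rw [← sub_zero M]
    refine card_le_of_separated hM (by positivity) (fun v hv => ?_) ?_
    · obtain ⟨w, -, rfl⟩ := Finset.mem_image.1 hv
      exact prefixSum_mem_Icc hβ hm w
    · simp only [V, Finset.mem_image, Finset.mem_univ, true_and]
      rintro _ ⟨w, rfl⟩ _ ⟨w', rfl⟩ hne
      exact hsep w w' hne
  calc volume (fringe β m n)
      ≤ ∑ v ∈ V, volume (Icc (v - t / (n : ℝ) ^ 2) (v + t * M + t / (n : ℝ) ^ 2) \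
          Icc v (v + t * M)) := hunion ▸ measure_biUnion_finset_le V _
    _ ≤ ∑ _v ∈ V, ENNReal.ofReal (2 * (t / (n : ℝ) ^ 2)) :=
        Finset.sum_le_sum fun v _ => volume_Icc_diff_Icc_le _ _ (by positivity)
    _ = ENNReal.ofReal (V.card * (2 * (t / (n : ℝ) ^ 2))) := by
        rw [Finset.sum_const, nsmul_eq_mul, ENNReal.ofReal_mul (Nat.cast_nonneg _),
          ENNReal.ofReal_natCast]
    _ ≤ ENNReal.ofReal (2 * (M / c + 1) / (n : ℝ) ^ 2) := by
        refine ENNReal.ofReal_le_ofReal ?_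
        calc (V.card : ℝ) * (2 * (t / (n : ℝ) ^ 2))
            ≤ (M / (c * t) + 1) * (2 * (t / (n : ℝ) ^ 2)) := by gcongr
          _ = 2 * (M / c + t) / (n : ℝ) ^ 2 := by field_simp
          _ ≤ 2 * (M / c + 1) / (n : ℝ) ^ 2 := by gcongr

lemma IsPisot.tsum_volume_fringe_ne_top (hβ : IsPisot β) (hm : 1 ≤ m) :
    ∑' n, volume (fringe β m n) ≠ ⊤ := by
  obtain ⟨c, hc, hsep⟩ := hβ.exists_pos_le_abs_sub_prefixSum m
  set C := 2 * (((m : ℝ) - 1) / (β - 1) / c + 1)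
  have hC : 0 ≤ C := by have := sub_one_div_sub_one_nonneg hβ.1 hm; positivity
  have hs : Summable fun n : ℕ => C / (n : ℝ) ^ 2 := by
    simpa only [div_eq_mul_inv] using (Real.summable_nat_pow_inv.2 one_lt_two).mul_left C
  exact ne_top_of_le_ne_top ENNReal.ofReal_ne_top <|
    (ENNReal.tsum_le_tsum fun n => volume_fringe_le hβ.1 hm hc (hsep n)).trans_eq
      (ENNReal.ofReal_tsum_of_nonneg (fun n => by positivity) hs).symm

end Fringe

/-- for Lebesgue-a.e. x ∈ I_β, for all but finitely many n the slightly
enlarged digit set ℰ′_n(x;β) coincides with the prefix set ℰ_n(x;β). -/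
theorem enlarged_prefix_set_eventually_equal (β : ℝ) (m : ℕ) (hβ : IsPisot β)
    (hm : β < m) :
    ∀ᵐ x ∂(volume.restrict (Icc (0 : ℝ) ((m - 1) / (β - 1)))),
      ∀ᶠ n : ℕ in atTop,
        {w : Fin n → Fin m |
            x - ((m : ℝ) - 1) * β⁻¹ ^ n / (β - 1) - β⁻¹ ^ n / (n : ℝ) ^ 2 ≤
              ∑ k : Fin n, ((w k : ℕ) : ℝ) / β ^ ((k : ℕ) + 1) ∧
            ∑ k : Fin n, ((w k : ℕ) : ℝ) / β ^ ((k : ℕ) + 1) ≤ x + β⁻¹ ^ n / (n : ℝ) ^ 2} =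
          {w : Fin n → Fin m | ∃ ε : ℕ → Fin m, (∀ k : Fin n, ε k = w k) ∧
            x = ∑' k : ℕ, ((ε k : ℕ) : ℝ) / β ^ (k + 1)} := by
  have hm1 : 1 ≤ m := by exact_mod_cast hβ.1.le.trans hm.le
  filter_upwards [ae_restrict_of_ae (ae_eventually_notMem (hβ.tsum_volume_fringe_ne_top hm1))]
    with x hx
  filter_upwards [hx] with n hn
  exact enlargedPrefixSet_eq_of_notMem_fringe hβ.1 hm.le hn
end

section
/- Let β > 1 be a real number, m > β a positive integer, K ≥ 1 an integer, and x ∈ I_β. Suppose that for every n ≥ 0 and every word (ε₁,…,ε_n) ∈ {0,1,…,m−1}^n occurring as the first n digits of some β-expansion of x, the tail value y = β^n·(x − Σ_{k=1}^n ε_k β^{−k}) satisfies 𝒩_K(y;β) ≥ 2. Then for every n ≥ 1, 𝒩_n(x;β) ≥ 2^{⌊n/K⌋} ≥ 2^{n/K − 1}. -/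
/-!
Every prefix of length `n` of an expansion of `x` extends to at least as many prefixes of length
`n + K` as the tail value `β ^ n * (x - ∑ k < n, ε k / β ^ (k + 1))` has prefixes of length `K`,
since a prefix of the tail appended to the prefix of `x` is again a prefix of `x`. Hence
`c * 𝒩_n(x) ≤ 𝒩_{n+K}(x)` whenever all tails satisfy `c ≤ 𝒩_K`, and iterating from
`𝒩_0(x) = 1` (the greedy algorithm produces an expansion of every `x ∈ I_β`) gives
`2 ^ ⌊n/K⌋ ≤ 𝒩_{K ⌊n/K⌋}(x) ≤ 𝒩_n(x)`.
-/

open MeasureTheory Filter Set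

theorem Nat.mul_card_le_card_of_le_card_fiber {α β : Type*} [Finite α] [Finite β] (f : α → β)
    (c : ℕ) (hc : ∀ b, c ≤ Nat.card {a // f a = b}) : c * Nat.card β ≤ Nat.card α := by
  have := Fintype.ofFinite β
  calc c * Nat.card β = ∑ _b : β, c := by simp [Nat.card_eq_fintype_card, mul_comm]
    _ ≤ ∑ b, Nat.card {a // f a = b} := Finset.sum_le_sum fun b _ => hc b
    _ = Nat.card α := by rw [← Nat.card_sigma, Nat.card_congr (Equiv.sigmaFiberEquiv f)]

theorem Real.rpow_div_sub_one_le_pow_div {b : ℝ} (hb : 1 ≤ b) (n K : ℕ) :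
    b ^ ((n : ℝ) / K - 1) ≤ b ^ (n / K) := by
  have hfloor : (n : ℝ) / K < (n / K : ℕ) + 1 := by
    simpa only [Nat.floor_div_eq_div] using Nat.lt_floor_add_one ((n : ℝ) / K)
  rw [← Real.rpow_natCast]
  exact Real.rpow_le_rpow_of_exponent_le hb (by linarith)

open Topology

namespace BetaExpansion

variable {β : ℝ} {m : ℕ}

noncomputable def value (β : ℝ) (ε : ℕ → Fin m) : ℝ := ∑' k, ((ε k : ℕ) : ℝ) / β ^ (k + 1)

noncomputable def partialValue (β : ℝ) (ε : ℕ → Fin m) (n : ℕ) : ℝ :=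
  ∑ k ∈ Finset.range n, ((ε k : ℕ) : ℝ) / β ^ (k + 1)

theorem summable_digits (hβ : 1 < β) (ε : ℕ → Fin m) :
    Summable fun k => ((ε k : ℕ) : ℝ) / β ^ (k + 1) := by
  have hgeom : Summable fun k : ℕ => (m : ℝ) * (β⁻¹) ^ (k + 1) :=
    ((summable_geometric_of_lt_one (by positivity) (inv_lt_one_of_one_lt₀ hβ)).comp_injective
      (add_left_injective 1)).mul_left _
  refine hgeom.of_nonneg_of_le (fun k => by positivity) fun k => ?_
  rw [inv_pow, ← div_eq_mul_inv]
  gcongr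
  exact_mod_cast (ε k).2.le

theorem value_eq_partialValue_add (hβ : 1 < β) (ε : ℕ → Fin m) (n : ℕ) :
    value β ε = partialValue β ε n + value β (fun k => ε (n + k)) / β ^ n := by
  have hβ0 : β ≠ 0 := by positivity
  rw [value, ← (summable_digits hβ ε).sum_add_tsum_nat_add n, value, ← tsum_div_const]
  congr 1
  refine tsum_congr fun k => ?_
  rw [add_comm k n, add_assoc, pow_add, div_div, mul_comm]

theorem value_concat (hβ : 1 < β) (ε δ : ℕ → Fin m) (n : ℕ) :
    value β (fun k => if k < n then ε k else δ (k - n)) =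
      partialValue β ε n + value β δ / β ^ n := by
  rw [value_eq_partialValue_add hβ _ n]
  congr 1
  · exact Finset.sum_congr rfl fun k hk => by simp [Finset.mem_range.mp hk]
  · simp

noncomputable def greedyDigit (β : ℝ) (m : ℕ) (r : ℝ) : ℕ := min ⌊β * r⌋₊ (m - 1)

noncomputable def greedyRemainder (β : ℝ) (m : ℕ) (x : ℝ) : ℕ → ℝ
  | 0 => x
  | n + 1 => β * greedyRemainder β m x n - greedyDigit β m (greedyRemainder β m x n)

theorem greedyDigit_lt (hm : 0 < m) (r : ℝ) : greedyDigit β m r < m :=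
  (min_le_right _ _).trans_lt (Nat.sub_lt hm one_pos)

theorem sub_greedyDigit_mem_Icc (hβ : 1 < β) (hm : β ≤ m) {r : ℝ}
    (hr : r ∈ Icc 0 ((m - 1) / (β - 1))) :
    β * r - greedyDigit β m r ∈ Icc 0 ((m - 1) / (β - 1)) := by
  obtain ⟨hr0, hrC⟩ := hr
  have hβr : 0 ≤ β * r := by positivity
  rcases le_total ⌊β * r⌋₊ (m - 1) with hfloor | hfloor
  · have hC : 1 ≤ ((m : ℝ) - 1) / (β - 1) := (one_le_div (by linarith)).2 (by linarith)
    rw [greedyDigit, min_eq_left hfloor]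
    constructor <;> linarith [Nat.floor_le hβr, Nat.lt_floor_add_one (β * r)]
  · have hm1 : ((m - 1 : ℕ) : ℝ) = m - 1 :=
      Nat.cast_pred (by exact_mod_cast (zero_lt_one.trans hβ).trans_le hm)
    have hfixed : β * ((m - 1) / (β - 1)) - (m - 1) = ((m : ℝ) - 1) / (β - 1) := by
      field_simp [show β - 1 ≠ 0 by linarith]
      ring
    have hle : ((m - 1 : ℕ) : ℝ) ≤ β * r := (Nat.cast_le.2 hfloor).trans (Nat.floor_le hβr)
    have hβrC := mul_le_mul_of_nonneg_left hrC (zero_le_one.trans hβ.le)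
    rw [greedyDigit, min_eq_right hfloor, hm1]
    constructor <;> linarith

theorem greedyRemainder_mem_Icc (hβ : 1 < β) (hm : β ≤ m) {x : ℝ}
    (hx : x ∈ Icc 0 ((m - 1) / (β - 1))) (n : ℕ) :
    greedyRemainder β m x n ∈ Icc 0 ((m - 1) / (β - 1)) := by
  induction n with
  | zero => exact hx
  | succ n ih => exact sub_greedyDigit_mem_Icc hβ hm ih

theorem sum_greedyDigit (hβ : 1 < β) (x : ℝ) (n : ℕ) :
    ∑ k ∈ Finset.range n, (greedyDigit β m (greedyRemainder β m x k) : ℝ) / β ^ (k + 1) =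
      x - greedyRemainder β m x n / β ^ n := by
  have hβ0 : β ≠ 0 := by positivity
  induction n with
  | zero => simp [greedyRemainder]
  | succ n ih =>
    rw [Finset.sum_range_succ, ih, greedyRemainder]
    field_simp
    ring

theorem exists_value_eq (hβ : 1 < β) (hm : β ≤ m) {x : ℝ}
    (hx : x ∈ Icc 0 ((m - 1) / (β - 1))) : ∃ ε : ℕ → Fin m, x = value β ε := by
  have hm0 : 0 < m := by exact_mod_cast (zero_lt_one.trans hβ).trans_le hm
  refine ⟨fun k => ⟨greedyDigit β m (greedyRemainder β m x k), greedyDigit_lt hm0 _⟩, ?_⟩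
  have hmem := greedyRemainder_mem_Icc hβ hm hx
  have hrem : Tendsto (fun n => greedyRemainder β m x n / β ^ n) atTop (𝓝 0) := by
    refine squeeze_zero (fun n => div_nonneg (hmem n).1 (by positivity)) (fun n => ?_)
      (by simpa using (tendsto_pow_atTop_nhds_zero_of_lt_one (by positivity)
        (inv_lt_one_of_one_lt₀ hβ)).const_mul (((m : ℝ) - 1) / (β - 1)))
    rw [← div_eq_mul_inv]
    gcongr
    exact (hmem n).2
  refine (HasSum.tsum_eq ?_).symm
  rw [hasSum_iff_tendsto_nat_of_nonneg (fun k => by positivity)]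
  simp only [sum_greedyDigit hβ]
  simpa using tendsto_const_nhds.sub hrem

def prefixes (β : ℝ) (m n : ℕ) (x : ℝ) : Set (Fin n → Fin m) :=
  {w | ∃ ε : ℕ → Fin m, (∀ k : Fin n, ε k = w k) ∧ x = value β ε}

theorem append_mem_prefixes (hβ : 1 < β) {n K : ℕ} {x : ℝ} {ε : ℕ → Fin m} {p : Fin n → Fin m}
    (hεp : ∀ k : Fin n, ε k = p k) {w : Fin K → Fin m}
    (hw : w ∈ prefixes β m K (β ^ n * (x - partialValue β ε n))) :
    Fin.append p w ∈ prefixes β m (n + K) x := by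
  obtain ⟨δ, hδw, hδ⟩ := hw
  refine ⟨fun k => if k < n then ε k else δ (k - n), fun k => ?_, ?_⟩
  · refine Fin.addCases (fun i => ?_) (fun j => ?_) k
    · simp [hεp]
    · simp [hδw]
  · have : β ^ n ≠ 0 := by positivity
    rw [value_concat hβ, ← hδ]
    field_simp
    ring

def restrictPrefix {n' n : ℕ} (h : n' ≤ n) {x : ℝ} (w : prefixes β m n x) : prefixes β m n' x :=
  ⟨w.1 ∘ Fin.castLE h, by
    obtain ⟨ε, hεw, hε⟩ := w.2
    exact ⟨ε, fun k => hεw (Fin.castLE h k), hε⟩⟩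

theorem restrictPrefix_surjective {n' n : ℕ} (h : n' ≤ n) (x : ℝ) :
    Function.Surjective (restrictPrefix (β := β) (m := m) (x := x) h) := by
  rintro ⟨w, ε, hεw, hε⟩
  exact ⟨⟨fun k => ε k, ε, fun k => rfl, hε⟩, Subtype.ext (funext fun k => hεw k)⟩

theorem Nn_monotone (x : ℝ) : Monotone fun n => Nn β m n x := fun _ _ h =>
  Nat.card_le_card_of_surjective _ (restrictPrefix_surjective h x)

theorem mul_Nn_le_Nn_add (hβ : 1 < β) {c n K : ℕ} {x : ℝ}
    (h : ∀ ε : ℕ → Fin m, x = value β ε → c ≤ Nn β m K (β ^ n * (x - partialValue β ε n))) :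
    c * Nn β m n x ≤ Nn β m (n + K) x := by
  refine Nat.mul_card_le_card_of_le_card_fiber (restrictPrefix (Nat.le_add_right n K)) c
    fun p => ?_
  obtain ⟨ε, hεp, hε⟩ := p.2
  let extend (w : prefixes β m K (β ^ n * (x - partialValue β ε n))) :
      {q // restrictPrefix (Nat.le_add_right n K) q = p} :=
    ⟨⟨Fin.append p.1 w.1, append_mem_prefixes hβ hεp w.2⟩,
      Subtype.ext (funext fun i => Fin.append_left p.1 w.1 i)⟩
  have extend_injective : Function.Injective extend := fun w w' hww' =>
    Subtype.ext (funext fun j => by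
      simpa only [extend, Fin.append_right] using
        congrFun (congrArg Subtype.val (congrArg Subtype.val hww')) (Fin.natAdd n j))
  exact (h ε hε).trans (Nat.card_le_card_of_injective extend extend_injective)

theorem pow_le_Nn_mul (hβ : 1 < β) {c K : ℕ} {x : ℝ} (hx : ∃ ε : ℕ → Fin m, x = value β ε)
    (h : ∀ (n : ℕ) (ε : ℕ → Fin m), x = value β ε →
      c ≤ Nn β m K (β ^ n * (x - partialValue β ε n))) (j : ℕ) :
    c ^ j ≤ Nn β m (K * j) x := by
  induction j with
  | zero =>
    obtain ⟨ε, hε⟩ := hx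
    have : Nonempty (prefixes β m 0 x) := ⟨⟨finZeroElim, ε, fun k => k.elim0, hε⟩⟩
    exact Nat.card_pos (α := prefixes β m 0 x)
  | succ j ih =>
    calc c ^ (j + 1) = c * c ^ j := pow_succ' c j
      _ ≤ c * Nn β m (K * j) x := Nat.mul_le_mul_left c ih
      _ ≤ Nn β m (K * j + K) x := mul_Nn_le_Nn_add hβ (h (K * j))

end BetaExpansion

theorem branching_lower_bound_general (β : ℝ) (hβ : 1 < β) (m : ℕ) (hm : β < m)
    (K : ℕ) (x : ℝ) (hx : x ∈ Icc (0 : ℝ) ((m - 1) / (β - 1)))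
    (h : ∀ (n : ℕ) (ε : ℕ → Fin m), x = ∑' k : ℕ, ((ε k : ℕ) : ℝ) / β ^ (k + 1) →
      2 ≤ Nn β m K
            (β ^ n * (x - ∑ k ∈ Finset.range n, ((ε k : ℕ) : ℝ) / β ^ (k + 1)))) :
    ∀ n : ℕ, 1 ≤ n →
      2 ^ (n / K) ≤ Nn β m n x ∧
      (2 : ℝ) ^ ((n : ℝ) / (K : ℝ) - 1) ≤ (2 : ℝ) ^ (n / K) := by
  intro n _
  refine ⟨?_, Real.rpow_div_sub_one_le_pow_div one_le_two n K⟩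
  calc 2 ^ (n / K) ≤ Nn β m (K * (n / K)) x :=
        BetaExpansion.pow_le_Nn_mul hβ (BetaExpansion.exists_value_eq hβ hm.le hx) h (n / K)
    _ ≤ Nn β m n x := BetaExpansion.Nn_monotone x (Nat.mul_div_le n K)

/-- if after every prefix of every β-expansion of x the tail value admits
at least two distinct digit words of length K (i.e. every branch of the branching tree
has length at most K), then `𝒩_n(x;β) ≥ 2^⌊n/K⌋ ≥ 2^{n/K−1}`. -/
theorem branching_lower_bound (β : ℝ) (hβ : 1 < β) (m : ℕ) (hm : β < m)
    (K : ℕ) (hK : 1 ≤ K) (x : ℝ) (hx : x ∈ Icc (0 : ℝ) ((m - 1) / (β - 1)))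
    (h : ∀ (n : ℕ) (ε : ℕ → Fin m), x = ∑' k : ℕ, ((ε k : ℕ) : ℝ) / β ^ (k + 1) →
      2 ≤ Nn β m K
            (β ^ n * (x - ∑ k ∈ Finset.range n, ((ε k : ℕ) : ℝ) / β ^ (k + 1)))) :
    ∀ n : ℕ, 1 ≤ n →
      2 ^ (n / K) ≤ Nn β m n x ∧
      (2 : ℝ) ^ ((n : ℝ) / (K : ℝ) - 1) ≤ (2 : ℝ) ^ (n / K) :=
  branching_lower_bound_general β hβ m hm K x hx h
end
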